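/- Suppose 0 ≤ d < p. Every phase polynomial f : 𝔽_p^n → ℂ of degree at most d has the form f(x) = e^{2πiθ}·e_p(P(x)) for some real θ and some polynomial P : 𝔽_p^n → 𝔽_p of degree at most d, where e_p(m) = e^{2πim/p}. -/

import Mathlib

open Complex

/-- Multiplicative derivative in direction `y`: `(Δ̃_y f)(x) = f(x+y)·conj(f(x))`. -/
def mderiv {G : Type} [AddCommGroup G] (y : G) (f : G → ℂ) : G → ℂ :=
  fun x => f (x + y) * (starRingEnd ℂ) (f x)

/-- Iterated multiplicative derivatives along a list of directions. -/
def mderivs {G : Type} [AddCommGroup G] : List G → (G → ℂ) → (G → ℂ)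
  | [], f => f
  | y :: ys, f => mderivs ys (mderiv y f)

/-- `f` is a phase polynomial of degree at most `d` if all `(d+1)`-fold multiplicative
derivatives of `f` are identically `1`. -/
def IsPhasePoly {G : Type} [AddCommGroup G] (d : ℕ) (f : G → ℂ) : Prop :=
  ∀ ys : List G, ys.length = d + 1 → mderivs ys f = fun _ => 1

/-- Additive derivative in direction `y`: `(Δ_y P)(x) = P(x+y) − P(x)`. -/
def aderiv {G : Type} [AddCommGroup G] {R : Type} [AddCommGroup R]
    (y : G) (P : G → R) : G → R :=
  fun x => P (x + y) - P x

/-- Iterated additive derivatives along a list of directions. -/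
def aderivs {G : Type} [AddCommGroup G] {R : Type} [AddCommGroup R] :
    List G → (G → R) → (G → R)
  | [], P => P
  | y :: ys, P => aderivs ys (aderiv y P)

/-- `P : G → R` is a (classical) polynomial of degree at most `d` if all of its
`(d+1)`-fold additive finite differences vanish identically. -/
def IsPolyDegLE {G : Type} [AddCommGroup G] {R : Type} [AddCommGroup R]
    (d : ℕ) (P : G → R) : Prop :=
  ∀ ys : List G, ys.length = d + 1 → aderivs ys P = fun _ => 0

/-- `e_p(m) = e^{2πim/p}` for `m ∈ 𝔽_p`. -/
noncomputable def ep (p : ℕ) (m : ZMod p) : ℂ :=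
  Complex.exp (2 * Real.pi * Complex.I * (m.val : ℂ) / p)

/-!
Since `Δ̃_0 f = |f|²`, a phase polynomial has modulus one, so `f = e(φ)` for a polynomial `φ`
of degree `≤ d` with values in the circle group. For a direction `y` with `p • y = 0` the shift
`1 + Δ_y` has order dividing `p`; in the binomial expansion of `(1 + Δ_y)^p - 1` every coefficient
except the top one is divisible by `p`, and the top term `Δ_y^p φ` vanishes because `d < p`.
A downward induction on `k` then gives `p • Δ_y^k φ = 0` for all `k ≥ 1`. Hence `φ - φ 0` takes
values in the `p`-torsion of the circle, which is `e_p(𝔽_p)`.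
-/

open Finset

theorem nsmul_smul_eq_zero_of_one_add_pow_eq_one {A M : Type*} [Ring A] [AddCommGroup M]
    [Module A M] {p d : ℕ} (hp : p.Prime) (hd : d < p) {D : A} (hD : (1 + D) ^ p = 1) {m : M}
    (hm : D ^ (d + 1) • m = 0) : p • D • m = 0 := by
  have hvanish : ∀ k, d < k → D ^ k • m = 0 := fun k hk => by
    rw [← Nat.sub_add_cancel hk, pow_add, mul_smul, hm, smul_zero]
  have hsum : ∑ i ∈ range p, p.choose (i + 1) • D ^ (i + 1) = 0 := by
    have h := (Commute.one_right D).add_pow p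
    rw [add_comm, hD, sum_range_succ'] at h
    simpa [← Nat.cast_comm, ← nsmul_eq_mul] using h.symm
  suffices ∀ k, 1 ≤ k → p • D ^ k • m = 0 by simpa using this 1 le_rfl
  intro k
  induction k using Nat.strong_decreasing_induction with
  | base => exact ⟨d, fun k hk _ => by rw [hvanish k hk, smul_zero]⟩
  | step k ih =>
    intro hk
    have h := congrArg (fun a : A => (D ^ (k - 1) * a) • m) hsum
    simp only [mul_sum, mul_smul_comm, ← pow_add, sum_smul, smul_assoc, mul_zero, zero_smul] at h
    rwa [sum_eq_single 0, Nat.choose_one_right, zero_add, Nat.sub_add_cancel hk] at h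
    · intro i hi hi0
      rcases (Nat.succ_le_of_lt (mem_range.mp hi)).eq_or_lt with hip | hip
      · rw [hvanish _ (by omega), smul_zero]
      · obtain ⟨c, hc⟩ := hp.dvd_choose_self (Nat.succ_ne_zero i) hip
        rw [hc, mul_comm, mul_smul, ih _ (by omega) (by omega), smul_zero]
    · intro h0; exact absurd (mem_range.mpr hp.pos) h0

section AdditiveDerivatives

variable {G M : Type} [AddCommGroup G] [AddCommGroup M]

theorem funLeft_add_right_pow_apply (y : G) (k : ℕ) (φ : G → M) (x : G) :
    (LinearMap.funLeft ℤ M (· + y) ^ k) φ x = φ (x + k • y) := by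
  induction k generalizing x with
  | zero => simp
  | succ k ih =>
    rw [pow_succ', Module.End.mul_apply, LinearMap.funLeft_apply, ih, succ_nsmul', add_assoc]

theorem aderivs_replicate (y : G) (k : ℕ) (φ : G → M) :
    aderivs (List.replicate k y) φ = ((LinearMap.funLeft ℤ M (· + y) - 1) ^ k) φ := by
  induction k generalizing φ with
  | zero => rfl
  | succ k ih => rw [List.replicate_succ, aderivs, ih, pow_succ, Module.End.mul_apply]; rfl

theorem IsPolyDegLE.nsmul_aderiv_eq_zero {p d : ℕ} (hp : p.Prime) (hd : d < p) {φ : G → M}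
    (hφ : IsPolyDegLE d φ) {y : G} (hy : p • y = 0) : p • aderiv y φ = 0 := by
  have hshift : (1 + (LinearMap.funLeft ℤ M (· + y) - 1)) ^ p = 1 := by
    ext φ x
    simp [funLeft_add_right_pow_apply, hy]
  exact nsmul_smul_eq_zero_of_one_add_pow_eq_one hp hd hshift (m := φ)
    (by rw [Module.End.smul_def, ← aderivs_replicate]; exact hφ _ List.length_replicate)

theorem IsPolyDegLE.nsmul_sub_eq_zero {p d : ℕ} (hp : p.Prime) (hd : d < p)
    (hG : ∀ y : G, p • y = 0) {φ : G → M} (hφ : IsPolyDegLE d φ) (x : G) :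
    p • (φ x - φ 0) = 0 := by
  simpa [aderiv] using congrFun (hφ.nsmul_aderiv_eq_zero hp hd (hG x)) 0

theorem aderivs_sub_const (y : G) (ys : List G) (φ : G → M) (c : M) :
    aderivs (y :: ys) (fun x => φ x - c) = aderivs (y :: ys) φ := by
  rw [aderivs, aderivs]
  congr 1
  funext x
  exact sub_sub_sub_cancel_right _ _ c

theorem IsPolyDegLE.sub_const {d : ℕ} {φ : G → M} (hφ : IsPolyDegLE d φ) (c : M) :
    IsPolyDegLE d (fun x => φ x - c) := by
  rintro (_ | ⟨y, ys⟩) hys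
  · simp at hys
  · rw [aderivs_sub_const, hφ _ hys]

theorem aderivs_addMonoidHom_comp {N : Type} [AddCommGroup N] (j : M →+ N) (ys : List G)
    (φ : G → M) :
    aderivs ys (j ∘ φ) = j ∘ aderivs ys φ := by
  induction ys generalizing φ with
  | nil => rfl
  | cons y ys ih =>
    rw [aderivs, aderivs, ← ih]
    congr 1
    ext x
    simp [aderiv]

theorem IsPolyDegLE.of_comp {N : Type} [AddCommGroup N] {d : ℕ} {j : M →+ N}
    (hj : Function.Injective j) {φ : G → M} (hφ : IsPolyDegLE d (j ∘ φ)) : IsPolyDegLE d φ := by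
  intro ys hys
  ext x
  apply hj
  simpa [aderivs_addMonoidHom_comp] using congrFun (hφ ys hys) x

end AdditiveDerivatives

section PhasePolynomials

variable {G : Type} [AddCommGroup G]

theorem norm_mderivs_replicate_zero (f : G → ℂ) (k : ℕ) (x : G) :
    ‖mderivs (List.replicate k 0) f x‖ = ‖f x‖ ^ 2 ^ k := by
  induction k generalizing f with
  | zero => simp [mderivs]
  | succ k ih =>
    rw [List.replicate_succ, mderivs, ih, pow_succ', pow_mul]
    simp [mderiv, sq]

theorem IsPhasePoly.norm_eq_one {d : ℕ} {f : G → ℂ} (hf : IsPhasePoly d f) (x : G) :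
    ‖f x‖ = 1 := by
  have h := norm_mderivs_replicate_zero f (d + 1) x
  rw [hf _ List.length_replicate, norm_one, eq_comm] at h
  exact (pow_eq_one_iff_of_nonneg (norm_nonneg _) (by positivity)).mp h

theorem mderivs_coe_toMul (ys : List G) (u : G → Additive Circle) :
    mderivs ys (fun x => ((u x).toMul : ℂ)) = fun x => ((aderivs ys u x).toMul : ℂ) := by
  induction ys generalizing u with
  | nil => rfl
  | cons y ys ih =>
    rw [mderivs, aderivs, ← ih]
    congr 1
    ext x
    simp [mderiv, aderiv, div_eq_mul_inv, ← Circle.coe_inv_eq_conj]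

theorem IsPhasePoly.exists_isPolyDegLE_circle {d : ℕ} {f : G → ℂ} (hf : IsPhasePoly d f) :
    ∃ u : G → Additive Circle, IsPolyDegLE d u ∧ ∀ x, f x = (u x).toMul := by
  let u : G → Additive Circle := fun x =>
    Additive.ofMul ⟨f x, mem_sphere_zero_iff_norm.2 (hf.norm_eq_one x)⟩
  refine ⟨u, fun ys hys => ?_, fun x => rfl⟩
  funext x
  refine Additive.toMul.injective (Circle.ext ?_)
  rw [← congrFun (mderivs_coe_toMul ys u) x, show (fun x => ((u x).toMul : ℂ)) = f from rfl]
  simpa using congrFun (hf ys hys) x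

end PhasePolynomials

theorem ZMod.exists_toCircle_eq_of_nsmul_eq_zero {N : ℕ} [NeZero N] {a : Additive Circle}
    (ha : N • a = 0) : ∃ j : ZMod N, ZMod.toCircle j = a.toMul := by
  have hroot : toUnits a.toMul ∈ rootsOfUnity N Circle := by
    rw [_root_.mem_rootsOfUnity, ← map_pow, ← toMul_nsmul, ha, toMul_zero, map_one]
  obtain ⟨j, hj⟩ := (bijective_rootsOfUnityAddChar N).2 ⟨_, hroot⟩
  exact ⟨j, by simpa using congrArg (fun z => (z.val : Circle)) hj⟩

theorem Circle.exists_exp_two_pi_mul_I_eq (z : Circle) :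
    ∃ θ : ℝ, Complex.exp (2 * Real.pi * Complex.I * θ) = z := by
  refine ⟨Complex.arg z / (2 * Real.pi), ?_⟩
  conv_rhs => rw [← Circle.exp_arg z, Circle.coe_exp]
  congr 1
  push_cast
  field_simp

/-- If `0 ≤ d < p`, every phase polynomial `f : 𝔽_p^n → ℂ` of degree at most `d` has the
form `f(x) = e^{2πiθ}·e_p(P(x))` for some real `θ` and polynomial `P : 𝔽_p^n → 𝔽_p` of
degree at most `d`. -/
theorem phasePoly_structure {p n : ℕ} [Fact p.Prime] (d : ℕ) (hd : d < p)
    (f : (Fin n → ZMod p) → ℂ) (hf : IsPhasePoly d f) :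
    ∃ (θ : ℝ) (P : (Fin n → ZMod p) → ZMod p), IsPolyDegLE d P ∧
      ∀ x, f x = Complex.exp (2 * Real.pi * Complex.I * θ) * ep p (P x) := by
  have hp : p.Prime := Fact.out
  have hG : ∀ y : Fin n → ZMod p, p • y = 0 := fun y => by
    rw [← Nat.cast_smul_eq_nsmul (ZMod p), ZMod.natCast_self, zero_smul]
  obtain ⟨u, hu, hfu⟩ := hf.exists_isPolyDegLE_circle
  choose P hP using fun x =>
    ZMod.exists_toCircle_eq_of_nsmul_eq_zero (hu.nsmul_sub_eq_zero hp hd hG x)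
  obtain ⟨θ, hθ⟩ := (u 0).toMul.exists_exp_two_pi_mul_I_eq
  refine ⟨θ, P, ?_, fun x => ?_⟩
  · have hPu : ZMod.toCircle.toAddMonoidHom ∘ P = fun x => u x - u 0 := by
      funext x
      simp [hP]
    exact IsPolyDegLE.of_comp (Additive.ofMul.injective.comp ZMod.injective_toCircle)
      (hPu ▸ hu.sub_const (u 0))
  · rw [hfu, hθ, ep, ← ZMod.toCircle_apply, hP, ← Circle.coe_mul, ← toMul_add, add_sub_cancel]
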